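/- arXiv:2112.02352 — 3 statements merged into one kernel-verified Lean document; each statement's English description precedes it below -/
import Mathlib

section
/- Let K ⊆ L be simplicial complexes with L = K ∪ {σ, τ} where σ and τ are each maximal in L and σ ⊄ τ, σ ≠ τ. Suppose there exist a cycle x ⊆ K ∪ {σ} with σ ∈ x and a cycle x' ⊆ L with τ ∈ x'. Then there exists a cycle y ⊆ K ∪ {τ} with τ ∈ y and a cycle y' ⊆ L with σ ∈ y'. (I.e., in a forward switch, if both additions give birth indices in F, then both additions give birth indices in F'.) -/
/-!
Adding `σ` after `τ` still creates a cycle, because the cycle `x` through `σ` lies in `L`.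
For `τ` we need a cycle of `L` through `τ` avoiding `σ`, which then lies in `K ∪ {τ}`:
this is `x'` if `σ ∉ x'`, and otherwise the mod-2 sum `x + x'`, in which `σ` cancels
while `τ ∉ x` survives.
-/

open Finset

variable {V : Type} [DecidableEq V]

/-- The facets of a simplex `σ` (a simplex is a finite set of vertices):
all subsets obtained by removing one vertex. -/
def facets (σ : Finset V) : Finset (Finset V) := σ.image (fun v => σ.erase v)

/-- The mod-2 boundary of a chain `c` (a chain is a set of simplices):
a simplex `τ` belongs to `bd c` iff `τ` is a facet of an odd number of members of `c`. -/
def bd (c : Finset (Finset V)) : Finset (Finset V) :=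
  (c.biUnion facets).filter (fun τ => Odd ((c.filter (fun ρ => τ ∈ facets ρ)).card))

/-- A finite simplicial complex: simplices are nonempty finite sets of vertices,
closed under taking nonempty subsets. -/
def IsComplex (K : Finset (Finset V)) : Prop :=
  (∀ σ ∈ K, σ.Nonempty) ∧ ∀ σ ∈ K, ∀ τ, τ ⊆ σ → τ.Nonempty → τ ∈ K

/-- `z` is a chain in `L` all of whose simplices have exactly `d` vertices
(i.e. a `(d-1)`-dimensional chain, with mod-2 chains identified with sets of simplices). -/
def IsChainIn (L : Finset (Finset V)) (d : ℕ) (z : Finset (Finset V)) : Prop :=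
  z ⊆ L ∧ ∀ ρ ∈ z, ρ.card = d

/-- `z` is a cycle in `L` made of simplices with `d` vertices (a `(d-1)`-dimensional cycle). -/
def IsCycleIn (L : Finset (Finset V)) (d : ℕ) (z : Finset (Finset V)) : Prop :=
  IsChainIn L d z ∧ bd z = ∅

/-- `x` is the boundary of some chain of `L` whose simplices have `d` vertices. -/
def IsBoundaryIn (L : Finset (Finset V)) (d : ℕ) (x : Finset (Finset V)) : Prop :=
  ∃ c, IsChainIn L d c ∧ bd c = x

open scoped symmDiff

theorem Finset.card_symmDiff_add_two_mul_card_inter {α : Type*} [DecidableEq α]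
    (s t : Finset α) : #(s ∆ t) + 2 * #(s ∩ t) = #s + #t := by
  have hst := card_sdiff_add_card_inter s t
  have hts := card_sdiff_add_card_inter t s
  rw [Finset.symmDiff_def, card_union_of_disjoint disjoint_sdiff_sdiff, inter_comm t s] at *
  omega

theorem Finset.filter_symmDiff {α : Type*} [DecidableEq α] (p : α → Prop) [DecidablePred p]
    (s t : Finset α) : (s ∆ t).filter p = s.filter p ∆ t.filter p := by
  ext a
  simp only [mem_filter, mem_symmDiff]
  tauto

theorem mem_bd_iff {c : Finset (Finset V)} {a : Finset V} :
    a ∈ bd c ↔ Odd #(c.filter (fun ρ => a ∈ facets ρ)) := by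
  refine ⟨fun h => (mem_filter.mp h).2, fun h => mem_filter.mpr ⟨?_, h⟩⟩
  obtain ⟨ρ, hρ⟩ := card_pos.mp h.pos
  exact mem_biUnion.mpr ⟨ρ, (mem_filter.mp hρ).1, (mem_filter.mp hρ).2⟩

theorem bd_symmDiff (c d : Finset (Finset V)) : bd (c ∆ d) = bd c ∆ bd d := by
  ext a
  have hcard := card_symmDiff_add_two_mul_card_inter
    (c.filter (fun ρ => a ∈ facets ρ)) (d.filter (fun ρ => a ∈ facets ρ))
  rw [← filter_symmDiff] at hcard
  simp only [mem_symmDiff, mem_bd_iff, ← Nat.not_even_iff_odd]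
  have := congrArg Even hcard
  simp only [Nat.even_add, even_two_mul, iff_true] at this
  tauto

theorem IsCycleIn.symmDiff {L : Finset (Finset V)} {d : ℕ} {x y : Finset (Finset V)}
    (hx : IsCycleIn L d x) (hy : IsCycleIn L d y) : IsCycleIn L d (x ∆ y) := by
  refine ⟨⟨?_, fun ρ hρ => ?_⟩, by rw [bd_symmDiff, hx.2, hy.2, symmDiff_self, bot_eq_empty]⟩
  · exact (symmDiff_le_sup ..).trans (union_subset hx.1.1 hy.1.1)
  · rcases mem_symmDiff.mp hρ with h | h
    exacts [hx.1.2 ρ h.1, hy.1.2 ρ h.1]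

theorem IsCycleIn.of_subset {L M : Finset (Finset V)} {d : ℕ} {z : Finset (Finset V)}
    (hz : IsCycleIn L d z) (h : z ⊆ M) : IsCycleIn M d z :=
  ⟨⟨h, hz.1.2⟩, hz.2⟩

theorem exists_cycle_mem_notMem {L : Finset (Finset V)} {d : ℕ} {σ τ : Finset V}
    {x x' : Finset (Finset V)} (hx : IsCycleIn L d x) (hσx : σ ∈ x) (hτx : τ ∉ x)
    (hx' : IsCycleIn L d x') (hτx' : τ ∈ x') :
    ∃ y, IsCycleIn L d y ∧ τ ∈ y ∧ σ ∉ y := by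
  by_cases hσx' : σ ∈ x'
  · exact ⟨x ∆ x', hx.symmDiff hx', mem_symmDiff.mpr (.inr ⟨hτx', hτx⟩),
      fun h => by rcases mem_symmDiff.mp h with h | h <;> tauto⟩
  · exact ⟨x', hx', hτx', hσx'⟩

theorem stmt2_general {V : Type} [DecidableEq V] (K : Finset (Finset V)) (σ τ : Finset V)
    (hτ : τ ∉ K) (hne : σ ≠ τ) (p : ℕ)
    (x x' : Finset (Finset V))
    (hx : IsCycleIn (insert σ K) (p + 1) x) (hσx : σ ∈ x)
    (hx' : IsCycleIn (insert τ (insert σ K)) (p + 1) x') (hτx' : τ ∈ x') :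
    (∃ y, IsCycleIn (insert τ K) (p + 1) y ∧ τ ∈ y) ∧
    (∃ y', IsCycleIn (insert τ (insert σ K)) (p + 1) y' ∧ σ ∈ y') := by
  have hτx : τ ∉ x := fun h => (mem_insert.mp (hx.1.1 h)).elim (hne ·.symm) hτ
  have hxL : IsCycleIn (insert τ (insert σ K)) (p + 1) x :=
    hx.of_subset (hx.1.1.trans (subset_insert _ _))
  obtain ⟨y, hy, hτy, hσy⟩ := exists_cycle_mem_notMem hxL hσx hτx hx' hτx'
  refine ⟨⟨y, hy.of_subset fun ρ hρ => ?_, hτy⟩, ⟨x, hxL, hσx⟩⟩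
  rcases mem_insert.mp (hy.1.1 hρ) with h | h
  · exact mem_insert.mpr (.inl h)
  · exact mem_insert_of_mem ((mem_insert.mp h).resolve_left (ne_of_mem_of_not_mem hρ hσy))

/-- Forward switch, birth–birth case.  In the filtration
`K ↪ K∪{σ} ↪ K∪{σ,τ}` (with `σ ⊄ τ`, `σ ≠ τ`), suppose both additions are births:
there is a cycle `x ⊆ K∪{σ}` with `σ ∈ x` and a cycle `x' ⊆ K∪{σ,τ}` with `τ ∈ x'`.
Then in the switched filtration `K ↪ K∪{τ} ↪ K∪{σ,τ}` both additions are births: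
there is a cycle `y ⊆ K∪{τ}` with `τ ∈ y` and a cycle `y' ⊆ K∪{σ,τ}` with `σ ∈ y'`. -/
theorem stmt2 {V : Type} [DecidableEq V] (K : Finset (Finset V)) (σ τ : Finset V)
    (hK : IsComplex K) (hσ : σ ∉ K) (hτ : τ ∉ K) (hne : σ ≠ τ) (hsub : ¬ σ ⊆ τ)
    (hKσ : IsComplex (insert σ K)) (hKτ : IsComplex (insert τ K))
    (hKστ : IsComplex (insert τ (insert σ K))) (p : ℕ)
    (x x' : Finset (Finset V))
    (hx : IsCycleIn (insert σ K) (p + 1) x) (hσx : σ ∈ x)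
    (hx' : IsCycleIn (insert τ (insert σ K)) (p + 1) x') (hτx' : τ ∈ x') :
    (∃ y, IsCycleIn (insert τ K) (p + 1) y ∧ τ ∈ y) ∧
    (∃ y', IsCycleIn (insert τ (insert σ K)) (p + 1) y' ∧ σ ∈ y') :=
  stmt2_general K σ τ hτ hne p x x' hx hσx hx' hτx'
end

section
/- Every simplex-wise zigzag filtration of finite simplicial complexes starting and ending with the empty complex can be transformed into the empty filtration by a finite sequence of the eight atomic operations: forward switch, backward switch, outward switch, inward switch, outward expansion, outward contraction, inward expansion, inward contraction. Consequently, any two such filtrations are connected by a finite sequence of atomic operations. -/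
open Finset

variable {V : Type} [DecidableEq V]

/-- One step of a simplex-wise zigzag filtration: the next complex is obtained by
adding or deleting exactly one simplex. -/
def SimplexwiseStep (K K' : Finset (Finset V)) : Prop :=
  (∃ σ ∉ K, K' = insert σ K) ∨ (∃ σ ∉ K', K = insert σ K')

/-- A simplex-wise zigzag filtration starting and ending with the empty complex,
given as the list of its complexes. -/
def ValidFilt (F : List (Finset (Finset V))) : Prop :=
  F ≠ [] ∧ F.head? = some ∅ ∧ F.getLast? = some ∅ ∧
  (∀ K ∈ F, IsComplex K) ∧ F.Chain' SimplexwiseStep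

/-- Forward switch: interchange two consecutive simplex additions
`↪σ ↪τ ⇝ ↪τ ↪σ` (requires `σ ⊄ τ`). -/
def ForwardSwitch (F F' : List (Finset (Finset V))) : Prop :=
  ∃ (pre post : List (Finset (Finset V))) (A : Finset (Finset V)) (σ τ : Finset V),
    σ ∉ A ∧ τ ∉ A ∧ σ ≠ τ ∧ ¬ σ ⊆ τ ∧
    F = pre ++ A :: insert σ A :: insert τ (insert σ A) :: post ∧
    F' = pre ++ A :: insert τ A :: insert τ (insert σ A) :: post

/-- Backward switch: interchange two consecutive simplex deletions
`↩σ ↩τ ⇝ ↩τ ↩σ` (requires `τ ⊄ σ`). -/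
def BackwardSwitch (F F' : List (Finset (Finset V))) : Prop :=
  ∃ (pre post : List (Finset (Finset V))) (A : Finset (Finset V)) (σ τ : Finset V),
    σ ∉ A ∧ τ ∉ A ∧ σ ≠ τ ∧ ¬ τ ⊆ σ ∧
    F = pre ++ insert τ (insert σ A) :: insert τ A :: A :: post ∧
    F' = pre ++ insert τ (insert σ A) :: insert σ A :: A :: post

/-- Outward switch: `↪σ ↩τ ⇝ ↩τ ↪σ` (requires `σ ≠ τ`). -/
def OutwardSwitch (F F' : List (Finset (Finset V))) : Prop :=
  ∃ (pre post : List (Finset (Finset V))) (N : Finset (Finset V)) (σ τ : Finset V),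
    σ ∉ N ∧ τ ∉ N ∧ σ ≠ τ ∧
    F = pre ++ insert τ N :: insert σ (insert τ N) :: insert σ N :: post ∧
    F' = pre ++ insert τ N :: N :: insert σ N :: post

/-- Inward switch: `↩σ ↪τ ⇝ ↪τ ↩σ` (requires `σ ≠ τ`). -/
def InwardSwitch (F F' : List (Finset (Finset V))) : Prop :=
  ∃ (pre post : List (Finset (Finset V))) (N : Finset (Finset V)) (σ τ : Finset V),
    σ ∉ N ∧ τ ∉ N ∧ σ ≠ τ ∧
    F = pre ++ insert σ N :: N :: insert τ N :: post ∧
    F' = pre ++ insert σ N :: insert τ (insert σ N) :: insert τ N :: post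

/-- Outward expansion: replace a complex `K` (with `σ ∈ K` having no proper
cofaces) by `K ↩σ K∖{σ} ↪σ K`. -/
def OutwardExpansion (F F' : List (Finset (Finset V))) : Prop :=
  ∃ (pre post : List (Finset (Finset V))) (K : Finset (Finset V)) (σ : Finset V),
    σ ∈ K ∧ (∀ τ ∈ K, σ ⊆ τ → τ = σ) ∧
    F = pre ++ K :: post ∧
    F' = pre ++ K :: K.erase σ :: K :: post

/-- Outward contraction: the reverse of outward expansion. -/
def OutwardContraction (F F' : List (Finset (Finset V))) : Prop :=
  OutwardExpansion F' F

/-- Inward expansion: replace a complex `K` (with `σ ∉ K` and every proper face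
of `σ` in `K`) by `K ↪σ K∪{σ} ↩σ K`. -/
def InwardExpansion (F F' : List (Finset (Finset V))) : Prop :=
  ∃ (pre post : List (Finset (Finset V))) (K : Finset (Finset V)) (σ : Finset V),
    σ ∉ K ∧ σ.Nonempty ∧ (∀ τ, τ ⊂ σ → τ.Nonempty → τ ∈ K) ∧
    F = pre ++ K :: post ∧
    F' = pre ++ K :: insert σ K :: K :: post

/-- Inward contraction: the reverse of inward expansion. -/
def InwardContraction (F F' : List (Finset (Finset V))) : Prop :=
  InwardExpansion F' F

/-- The eight atomic update operations on zigzag filtrations. -/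
def Atomic (F F' : List (Finset (Finset V))) : Prop :=
  ForwardSwitch F F' ∨ BackwardSwitch F F' ∨ OutwardSwitch F F' ∨ InwardSwitch F F' ∨
  OutwardExpansion F F' ∨ OutwardContraction F F' ∨
  InwardExpansion F F' ∨ InwardContraction F F'

/-!
Repeatedly remove the first peak of the filtration, i.e. the first addition `X ↪ Y` that is
immediately followed by a deletion `Y ↩ Z`; such a peak exists as long as the filtration is
not trivial, since it starts with an addition and returns to `∅`. If the same simplex is added
and deleted, the peak is an inward contraction. Otherwise `X ∩ Z` is a complex, and the outward
switch `X ↩ X ∩ Z ↪ Z` replaces `Y` by the smaller complex `X ∩ Z`. Either way the total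
number of simplices in the filtration drops, so the process ends at the empty filtration `[∅]`.
-/

def InsertStep (X Y : Finset (Finset V)) : Prop := ∃ σ ∉ X, Y = insert σ X

def totalCard {α : Type*} (F : List (Finset α)) : ℕ := (F.map Finset.card).sum

lemma IsComplex.inter {K L : Finset (Finset V)} (hK : IsComplex K) (hL : IsComplex L) :
    IsComplex (K ∩ L) :=
  ⟨fun σ hσ => hK.1 σ (mem_inter.1 hσ).1, fun σ hσ τ hτ hne =>
    mem_inter.2 ⟨hK.2 σ (mem_inter.1 hσ).1 τ hτ hne, hL.2 σ (mem_inter.1 hσ).2 τ hτ hne⟩⟩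

lemma not_insertStep_empty (X : Finset (Finset V)) : ¬ InsertStep X ∅ :=
  fun ⟨σ, _, h⟩ => insert_ne_empty σ X h.symm

lemma ValidFilt.replace_segment {pre S S' post : List (Finset (Finset V))}
    (hF : ValidFilt (pre ++ S ++ post)) (hS' : S' ≠ []) (hhead : S'.head? = S.head?)
    (hlast : S'.getLast? = S.getLast?) (hcx : ∀ K ∈ S', IsComplex K)
    (hch : S'.IsChain SimplexwiseStep) : ValidFilt (pre ++ S' ++ post) := by
  obtain ⟨-, hF₁, hF₂, hFcx, hFch⟩ := hF
  have hS : S ≠ [] := by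
    rintro rfl
    exact hS' (List.head?_eq_none_iff.1 hhead)
  refine ⟨by simp [hS'], ?_, ?_, ?_, ?_⟩
  · simpa [List.head?_append, hhead] using hF₁
  · simpa [List.getLast?_append, hlast] using hF₂
  · intro K hK
    simp only [List.mem_append] at hK
    rcases hK with (hK | hK) | hK
    exacts [hFcx K (by simp [hK]), hcx K hK, hFcx K (by simp [hK])]
  · obtain ⟨hpreS, hpost, hlink⟩ := List.isChain_append.1 hFch
    obtain ⟨hpre, -, hlink'⟩ := List.isChain_append.1 hpreS
    refine List.isChain_append.2 ⟨List.isChain_append.2 ⟨hpre, hch, ?_⟩, hpost, ?_⟩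
    · simpa [List.head?_append, hhead] using hlink'
    · simpa [List.getLast?_append, hlast] using hlink

lemma exists_peak : ∀ {L : List (Finset (Finset V))} {X Y : Finset (Finset V)}, InsertStep X Y →
    (X :: Y :: L).IsChain SimplexwiseStep → (Y :: L).getLast? = some ∅ →
    ∃ pre X' Y' Z' post, X :: Y :: L = pre ++ X' :: Y' :: Z' :: post ∧
      InsertStep X' Y' ∧ InsertStep Z' Y'
  | [], X, Y, hXY, _, hlast => by
    obtain rfl : Y = ∅ := by simpa using hlast
    exact absurd hXY (not_insertStep_empty X)
  | Z :: L, X, Y, hXY, hch, hlast => by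
    rcases (List.isChain_cons_cons.1 hch.tail).1 with hYZ | hZY
    · obtain ⟨pre, X', Y', Z', post, hsplit, hpeak⟩ :=
        exists_peak hYZ hch.tail (by simpa using hlast)
      exact ⟨X :: pre, X', Y', Z', post, by rw [hsplit, List.cons_append], hpeak⟩
    · exact ⟨[], X, Y, Z, L, rfl, hXY, hZY⟩

lemma eq_insert_inter_of_insert_eq {α : Type*} [DecidableEq α] {X Z : Finset α} {a b : α}
    (hab : a ≠ b) (h : insert a X = insert b Z) : X = insert b (X ∩ Z) := by
  have hbX : b ∈ X := by
    have : b ∈ insert a X := h ▸ mem_insert_self b Z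
    exact (mem_insert.1 this).resolve_left hab.symm
  ext x
  have hx := congrArg (x ∈ ·) h
  simp only [mem_insert, mem_inter, eq_iff_iff] at hx ⊢
  grind

lemma InwardContraction.of_peak {pre post : List (Finset (Finset V))} {X : Finset (Finset V)}
    {σ : Finset V} (hσ : σ ∉ X) (hcx : IsComplex (insert σ X)) :
    InwardContraction (pre ++ X :: insert σ X :: X :: post) (pre ++ X :: post) := by
  refine ⟨pre, post, X, σ, hσ, hcx.1 σ (mem_insert_self σ X), fun τ hτ hne => ?_, rfl, rfl⟩
  exact (mem_insert.1 (hcx.2 σ (mem_insert_self σ X) τ hτ.subset hne)).resolve_left hτ.ne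

lemma ValidFilt.exists_atomic_of_peak {pre post : List (Finset (Finset V))}
    {X Y Z : Finset (Finset V)} (hF : ValidFilt (pre ++ X :: Y :: Z :: post))
    (hXY : InsertStep X Y) (hZY : InsertStep Z Y) :
    ∃ F', Atomic (pre ++ X :: Y :: Z :: post) F' ∧ ValidFilt F' ∧
      totalCard F' < totalCard (pre ++ X :: Y :: Z :: post) := by
  obtain ⟨a, haX, rfl⟩ := hXY
  obtain ⟨b, hbZ, hY⟩ := hZY
  have hF' : ValidFilt (pre ++ [X, insert a X, Z] ++ post) := by simpa using hF
  have hcx : ∀ K ∈ [X, insert a X, Z], IsComplex K := fun K hK =>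
    hF'.2.2.2.1 K (List.mem_append_left _ (List.mem_append_right _ hK))
  by_cases hab : a = b
  · subst hab
    obtain rfl : X = Z := by rw [← erase_insert haX, hY, erase_insert hbZ]
    refine ⟨pre ++ X :: post, Or.inr <| Or.inr <| Or.inr <| Or.inr <| Or.inr <| Or.inr <| Or.inr <|
      InwardContraction.of_peak haX (hcx _ (by simp)), ?_, ?_⟩
    · simpa using hF'.replace_segment (S' := [X]) (by simp) rfl rfl
        (by simpa using hcx X (by simp)) (List.isChain_singleton X)
    · simp only [totalCard, List.map_append, List.map_cons, List.sum_append, List.sum_cons,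
        card_insert_of_notMem haX]
      omega
  · have hX : X = insert b (X ∩ Z) := eq_insert_inter_of_insert_eq hab hY
    have hZ : Z = insert a (X ∩ Z) := by
      rw [inter_comm]; exact eq_insert_inter_of_insert_eq (Ne.symm hab) hY.symm
    set N := X ∩ Z
    have haN : a ∉ N := fun h => haX (mem_inter.1 h).1
    have hbN : b ∉ N := fun h => hbZ (mem_inter.1 h).2
    refine ⟨pre ++ X :: N :: Z :: post, Or.inr <| Or.inr <| Or.inl
      ⟨pre, post, N, a, b, haN, hbN, hab, by rw [← hZ, ← hX], by rw [← hZ, ← hX]⟩, ?_, ?_⟩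
    · have hNcx : IsComplex N := (hcx X (by simp)).inter (hcx Z (by simp))
      have hch : [X, N, Z].IsChain SimplexwiseStep :=
        List.isChain_cons_cons.2 ⟨Or.inr ⟨b, hbN, hX⟩, List.isChain_pair.2 (Or.inl ⟨a, haN, hZ⟩)⟩
      simpa using hF'.replace_segment (S' := [X, N, Z]) (by simp) rfl rfl
        (by simp [hNcx, hcx X (by simp), hcx Z (by simp)]) hch
    · have : N.card ≤ X.card := card_le_card inter_subset_left
      simp only [totalCard, List.map_append, List.map_cons, List.sum_append, List.sum_cons,
        card_insert_of_notMem haX]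
      omega

lemma ValidFilt.exists_atomic {F : List (Finset (Finset V))} (hF : ValidFilt F) (hne : F ≠ [∅]) :
    ∃ F', Atomic F F' ∧ ValidFilt F' ∧ totalCard F' < totalCard F := by
  obtain ⟨hF₀, hhead, hlast, -, hch⟩ := id hF
  rcases F with _ | ⟨K, _ | ⟨Y, L⟩⟩
  · exact absurd rfl hF₀
  · simp_all
  obtain rfl : K = ∅ := by simpa using hhead
  have hY : InsertStep ∅ Y := (List.isChain_cons_cons.1 hch).1.resolve_right
    fun ⟨σ, hσ, h⟩ => not_insertStep_empty Y ⟨σ, hσ, h⟩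
  obtain ⟨pre, X', Y', Z', post, hsplit, hX'Y', hZ'Y'⟩ := exists_peak hY hch (by simpa using hlast)
  rw [hsplit] at hF ⊢
  exact hF.exists_atomic_of_peak hX'Y' hZ'Y'

theorem ValidFilt.reflTransGen_atomic {F : List (Finset (Finset V))} (hF : ValidFilt F) :
    Relation.ReflTransGen Atomic F [∅] := by
  by_cases hne : F = [∅]
  · exact hne ▸ .refl
  obtain ⟨F', hstep, hF', _⟩ := hF.exists_atomic hne
  exact .head hstep hF'.reflTransGen_atomic
termination_by totalCard F

/-- Universality of the atomic operations: every simplex-wise zigzag filtration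
starting and ending with the empty complex can be transformed into the empty
filtration by a finite sequence of atomic operations; consequently, any two such
filtrations are connected by a finite sequence of atomic operations (applied in
either direction). -/
theorem stmt13 {V : Type} [DecidableEq V] :
    (∀ F : List (Finset (Finset V)), ValidFilt F →
      Relation.ReflTransGen Atomic F [(∅ : Finset (Finset V))]) ∧
    (∀ F₁ F₂ : List (Finset (Finset V)), ValidFilt F₁ → ValidFilt F₂ →
      Relation.ReflTransGen (fun G G' => Atomic G G' ∨ Atomic G' G) F₁ F₂) :=
  ⟨fun _ hF => hF.reflTransGen_atomic, fun _ _ h₁ h₂ =>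
    (Relation.ReflTransGen.mono (fun _ _ => Or.inl) _ _ h₁.reflTransGen_atomic).trans
      (Relation.ReflTransGen.mono (fun _ _ => Or.inr) _ _
        (Relation.ReflTransGen.swap _ _ h₂.reflTransGen_atomic))⟩
end

section
/- Any simplex-wise zigzag filtration ∅ = K_0 ↔ ... ↔ K_m = ∅ can be transformed, using only inward switches and outward contractions, into an up-down filtration ∅ = L_0 ↪ ... ↪ L_n ↩ ... ↩ L_{2n} = ∅ in which all additions precede all deletions. -/
open Finset

variable {V : Type} [DecidableEq V]

/-- A filtration is up-down if all simplex additions precede all deletions. -/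
def UpDown (F : List (Finset (Finset V))) : Prop :=
  ∃ n, ∀ i, i + 1 < F.length →
    (i < n → ∃ σ ∉ F.getD i ∅, F.getD (i + 1) ∅ = insert σ (F.getD i ∅)) ∧
    (n ≤ i → ∃ σ ∉ F.getD (i + 1) ∅, F.getD i ∅ = insert σ (F.getD (i + 1) ∅))


/-!
Read a filtration as a word in additions and deletions. Wherever a deletion of `σ` is
immediately followed by an addition of `τ`, either `σ = τ` and the three complexes contract
to one, or `σ ≠ τ` and the inward switch turns the pair into an addition followed by a
deletion; the new middle complex `K ∪ {τ}` is the union of its two neighbours, hence a complex.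
Both moves strictly decrease the number of (deletion, later addition) pairs, so repeating them
terminates, and a filtration in which no deletion is immediately followed by an addition is
up-down.
-/

/-- Number of pairs (deletion, later addition) in a step sequence, where `false` encodes a
deletion and `true` an addition. -/
def inversions : List Bool → ℕ
  | [] => 0
  | b :: l => (if b then 0 else l.count true) + inversions l

lemma inversions_swap_lt (X Y : List Bool) :
    inversions (X ++ true :: false :: Y) < inversions (X ++ false :: true :: Y) := by
  induction X with
  | nil => simp [inversions]
  | cons x X ih =>
    simp only [List.cons_append, inversions, List.count_append, List.count_cons]
    cases x <;> simp <;> omega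

lemma inversions_erase_lt (X Y : List Bool) :
    inversions (X ++ Y) < inversions (X ++ false :: true :: Y) := by
  induction X with
  | nil => simp [inversions]
  | cons x X ih =>
    simp only [List.cons_append, inversions, List.count_append, List.count_cons]
    cases x <;> simp <;> omega

def steps {α : Type*} : List (Finset α) → List Bool
  | a :: b :: l => decide (a.card < b.card) :: steps (b :: l)
  | _ => []

lemma steps_append_cons {α : Type*} (l : List (Finset α)) (a : Finset α) (r : List (Finset α)) :
    steps (l ++ a :: r) = steps (l ++ [a]) ++ steps (a :: r) := by
  induction l with
  | nil => simp [steps]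
  | cons x l ih =>
    cases l with
    | nil => simp [steps]
    | cons y l => simp only [List.cons_append, steps] at *; rw [ih]

lemma steps_delete_add {N : Finset (Finset V)} {σ τ : Finset V} (hσ : σ ∉ N) (hτ : τ ∉ N)
    (pre post : List (Finset (Finset V))) :
    steps (pre ++ insert σ N :: N :: insert τ N :: post) =
      steps (pre ++ [insert σ N]) ++ false :: true :: steps (insert τ N :: post) := by
  rw [steps_append_cons]
  simp [steps, card_insert_of_notMem hσ, card_insert_of_notMem hτ]

lemma IsComplex.union {K L : Finset (Finset V)} (hK : IsComplex K) (hL : IsComplex L) :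
    IsComplex (K ∪ L) := by
  refine ⟨fun σ hσ => ?_, fun σ hσ τ hτσ hτ => ?_⟩
  · rcases mem_union.1 hσ with h | h
    exacts [hK.1 σ h, hL.1 σ h]
  · rcases mem_union.1 hσ with h | h
    exacts [mem_union_left _ (hK.2 σ h τ hτσ hτ), mem_union_right _ (hL.2 σ h τ hτσ hτ)]

lemma IsComplex.eq_of_subset_of_notMem {N : Finset (Finset V)} {σ ρ : Finset V}
    (hN : IsComplex N) (hσ : σ.Nonempty) (hσN : σ ∉ N) (hρ : ρ ∈ insert σ N) (hσρ : σ ⊆ ρ) :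
    ρ = σ :=
  (mem_insert.1 hρ).resolve_right fun hρN => hσN (hN.2 ρ hρN σ hσρ hσ)

lemma ValidFilt.replace_infix {pre S S' post : List (Finset (Finset V))}
    (hF : ValidFilt (pre ++ S ++ post)) (hne : S' ≠ [])
    (hhead : S'.head? = S.head?) (hlast : S'.getLast? = S.getLast?)
    (hcx : ∀ K ∈ S', IsComplex K) (hchain : S'.IsChain SimplexwiseStep) :
    ValidFilt (pre ++ S' ++ post) := by
  obtain ⟨-, hF₁, hF₂, hF₃, hF₄⟩ := hF
  refine ⟨by simp [hne], ?_, ?_, ?_, ?_⟩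
  · simpa only [List.head?_append, hhead] using hF₁
  · simpa only [List.getLast?_append, hlast] using hF₂
  · intro K hK
    rcases List.mem_append.1 hK with hK | hK
    · rcases List.mem_append.1 hK with hK | hK
      exacts [hF₃ K (by simp [hK]), hcx K hK]
    · exact hF₃ K (by simp [hK])
  · change List.IsChain _ _ at hF₄ ⊢
    simp only [List.isChain_append, List.getLast?_append, hhead, hlast] at hF₄ ⊢
    exact ⟨⟨hF₄.1.1, hchain, hF₄.1.2.2⟩, hF₄.2⟩

lemma outwardContraction_delete_add {pre post : List (Finset (Finset V))}
    {N : Finset (Finset V)} {σ : Finset V} (hσN : σ ∉ N) (hN : IsComplex N)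
    (hσN' : IsComplex (insert σ N)) :
    OutwardContraction (pre ++ insert σ N :: N :: insert σ N :: post)
      (pre ++ insert σ N :: post) :=
  ⟨pre, post, insert σ N, σ, mem_insert_self σ N,
    fun _ hρ hσρ => hN.eq_of_subset_of_notMem (hσN'.1 σ (mem_insert_self σ N)) hσN hρ hσρ,
    rfl, by rw [erase_insert hσN]⟩

def AddAt (F : List (Finset (Finset V))) (i : ℕ) : Prop :=
  ∃ σ ∉ F.getD i ∅, F.getD (i + 1) ∅ = insert σ (F.getD i ∅)

def DelAt (F : List (Finset (Finset V))) (i : ℕ) : Prop :=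
  ∃ σ ∉ F.getD (i + 1) ∅, F.getD i ∅ = insert σ (F.getD (i + 1) ∅)

lemma addAt_or_delAt {F : List (Finset (Finset V))} (hF : F.IsChain SimplexwiseStep)
    {i : ℕ} (hi : i + 1 < F.length) : AddAt F i ∨ DelAt F i := by
  rw [AddAt, DelAt, List.getD_eq_getElem F ∅ (by omega : i < F.length),
    List.getD_eq_getElem F ∅ hi]
  exact List.isChain_iff_getElem.1 hF i hi

lemma eq_append_delete_add {F : List (Finset (Finset V))} {i : ℕ} (hi : i + 2 < F.length)
    (hdel : DelAt F i) (hadd : AddAt F (i + 1)) :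
    ∃ pre post N σ τ, σ ∉ N ∧ τ ∉ N ∧ F = pre ++ insert σ N :: N :: insert τ N :: post := by
  obtain ⟨σ, hσ, hA⟩ := hdel
  obtain ⟨τ, hτ, hC⟩ := hadd
  refine ⟨F.take i, F.drop (i + 3), _, σ, τ, hσ, hτ, ?_⟩
  rw [← hA, ← hC, List.getD_eq_getElem F ∅ (by omega : i < F.length),
    List.getD_eq_getElem F ∅ (by omega : i + 1 < F.length),
    List.getD_eq_getElem F ∅ (by omega : i + 1 + 1 < F.length)]
  conv_lhs => rw [← List.take_append_drop i F]
  rw [List.drop_eq_getElem_cons (by omega), List.drop_eq_getElem_cons (by omega),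
    List.drop_eq_getElem_cons (by omega)]

lemma exists_threshold {m : ℕ} {P Q : ℕ → Prop} (hPQ : ∀ i < m, P i ∨ Q i)
    (hQP : ∀ i, i + 1 < m → Q i → ¬ P (i + 1)) :
    ∃ n, ∀ i < m, (i < n → P i) ∧ (n ≤ i → Q i) := by
  classical
  by_cases hQ : ∃ i < m, Q i
  · refine ⟨Nat.find hQ, fun i hi => ⟨fun hin => ?_, fun hni => ?_⟩⟩
    · exact (hPQ i hi).resolve_right fun hq => Nat.find_min hQ hin ⟨hi, hq⟩
    · induction i, hni using Nat.le_induction with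
      | base => exact (Nat.find_spec hQ).2
      | succ j _ ih => exact (hPQ _ hi).resolve_left (hQP j hi (ih (by omega)))
  · exact ⟨m, fun i hi => ⟨fun _ => (hPQ i hi).resolve_right fun hq => hQ ⟨i, hi, hq⟩,
      fun hmi => absurd hi (by omega)⟩⟩

lemma upDown_of_not_delAt_addAt {F : List (Finset (Finset V))} (hF : F.IsChain SimplexwiseStep)
    (h : ∀ i, i + 2 < F.length → ¬ (DelAt F i ∧ AddAt F (i + 1))) : UpDown F := by
  obtain ⟨n, hn⟩ := exists_threshold (m := F.length - 1) (P := AddAt F) (Q := DelAt F)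
    (fun i hi => addAt_or_delAt hF (by omega)) (fun i hi hd ha => h i (by omega) ⟨hd, ha⟩)
  exact ⟨n, fun i hi => hn i (by omega)⟩

lemma ValidFilt.isComplex {F : List (Finset (Finset V))} (hF : ValidFilt F) {K : Finset (Finset V)}
    (hK : K ∈ F) : IsComplex K :=
  hF.2.2.2.1 K hK

lemma ValidFilt.contract {pre post : List (Finset (Finset V))} {A B : Finset (Finset V)}
    (hF : ValidFilt (pre ++ A :: B :: A :: post)) : ValidFilt (pre ++ A :: post) := by
  simpa using ValidFilt.replace_infix (S := [A, B, A]) (S' := [A]) (by simpa using hF)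
    (List.cons_ne_nil _ _) rfl rfl (by simpa using hF.isComplex (by simp))
    (List.isChain_singleton _)

lemma ValidFilt.switch {pre post : List (Finset (Finset V))} {N : Finset (Finset V)}
    {σ τ : Finset V} (hF : ValidFilt (pre ++ insert σ N :: N :: insert τ N :: post))
    (hσ : σ ∉ N) (hτ : τ ∉ N) (hστ : σ ≠ τ) :
    ValidFilt (pre ++ insert σ N :: insert τ (insert σ N) :: insert τ N :: post) := by
  have hchain : [insert σ N, insert τ (insert σ N), insert τ N].IsChain SimplexwiseStep := by
    simp only [List.isChain_cons_cons, List.isChain_singleton, and_true]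
    exact ⟨Or.inl ⟨τ, by simp [hτ, hστ.symm], rfl⟩, Or.inr ⟨σ, by simp [hσ, hστ], insert_comm _ _ _⟩⟩
  have hunion : insert τ (insert σ N) = insert σ N ∪ insert τ N := by
    ext; simp only [mem_insert, mem_union]; tauto
  have hσN : IsComplex (insert σ N) := hF.isComplex (by simp)
  have hτN : IsComplex (insert τ N) := hF.isComplex (by simp)
  simpa using ValidFilt.replace_infix (S := [insert σ N, N, insert τ N])
    (S' := [insert σ N, insert τ (insert σ N), insert τ N]) (by simpa using hF)
    (List.cons_ne_nil _ _) rfl rfl (by simp [hσN, hτN, hunion ▸ hσN.union hτN]) hchain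

lemma inversions_steps_contract_lt {N : Finset (Finset V)} {σ : Finset V} (hσ : σ ∉ N)
    (pre post : List (Finset (Finset V))) :
    inversions (steps (pre ++ insert σ N :: post)) <
      inversions (steps (pre ++ insert σ N :: N :: insert σ N :: post)) := by
  rw [steps_delete_add hσ hσ, steps_append_cons]
  exact inversions_erase_lt _ _

lemma inversions_steps_switch_lt {N : Finset (Finset V)} {σ τ : Finset V} (hσ : σ ∉ N)
    (hτ : τ ∉ N) (hστ : σ ≠ τ) (pre post : List (Finset (Finset V))) :
    inversions (steps (pre ++ insert σ N :: insert τ (insert σ N) :: insert τ N :: post)) <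
      inversions (steps (pre ++ insert σ N :: N :: insert τ N :: post)) := by
  have hτσ : τ ∉ insert σ N := by simp [hτ, hστ.symm]
  rw [steps_delete_add hσ hτ, steps_append_cons]
  simp only [steps, card_insert_of_notMem hτσ, card_insert_of_notMem hσ, card_insert_of_notMem hτ]
  simpa using inversions_swap_lt _ _

lemma ValidFilt.exists_reduction {F : List (Finset (Finset V))} (hF : ValidFilt F) {i : ℕ}
    (hi : i + 2 < F.length) (hdel : DelAt F i) (hadd : AddAt F (i + 1)) :
    ∃ F', (InwardSwitch F F' ∨ OutwardContraction F F') ∧ ValidFilt F' ∧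
      inversions (steps F') < inversions (steps F) := by
  obtain ⟨pre, post, N, σ, τ, hσ, hτ, rfl⟩ := eq_append_delete_add hi hdel hadd
  by_cases hστ : σ = τ
  · subst hστ
    exact ⟨_, Or.inr (outwardContraction_delete_add hσ (hF.isComplex (by simp))
      (hF.isComplex (by simp))), hF.contract, inversions_steps_contract_lt hσ pre post⟩
  · exact ⟨_, Or.inl ⟨pre, post, N, σ, τ, hσ, hτ, hστ, rfl, rfl⟩, hF.switch hσ hτ hστ,
      inversions_steps_switch_lt hσ hτ hστ pre post⟩

/-- Any simplex-wise zigzag filtration starting and ending with the empty complex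
can be transformed, using only inward switches and outward contractions, into an
up-down filtration. -/
theorem stmt14 {V : Type} [DecidableEq V]
    (F : List (Finset (Finset V))) (hF : ValidFilt F) :
    ∃ G, Relation.ReflTransGen
        (fun G₁ G₂ => InwardSwitch G₁ G₂ ∨ OutwardContraction G₁ G₂) F G ∧
      ValidFilt G ∧ UpDown G := by
  induction hm : inversions (steps F) using Nat.strong_induction_on generalizing F with
  | _ m ih =>
  by_cases hpat : ∃ i, i + 2 < F.length ∧ DelAt F i ∧ AddAt F (i + 1)
  · obtain ⟨i, hi, hdel, hadd⟩ := hpat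
    obtain ⟨F', hmove, hF', hlt⟩ := hF.exists_reduction hi hdel hadd
    obtain ⟨G, hF'G, hG⟩ := ih _ (hm ▸ hlt) F' hF' rfl
    exact ⟨G, .head hmove hF'G, hG⟩
  · exact ⟨F, .refl, hF, upDown_of_not_delAt_addAt hF.2.2.2.2 fun i hi h => hpat ⟨i, hi, h⟩⟩
end
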